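/- Let f, F ∈ A depend only on the single variable u, and suppose f·(∂F/∂u) = a·F for some constant a ∈ ℂ, a ≠ 0, and let β ∈ ℂ. Then the master-formula λ-bracket with generator coefficients P_{(2,0)} = f·S₁(F)·S₁²(f), P_{(1,0)} = f·S₁(f)·(F + S₁(F) + β), P_{(−1,0)} = −S₁^{−1}(f)·f·(F + S₁^{−1}(F) + β), P_{(−2,0)} = −S₁^{−2}(f)·S₁^{−1}(F)·f, and P_T = 0 otherwise — corresponding to the essentially one-dimensional second-order operator P = f S₁∘F S₁∘f + f((F+β)S₁ + S₁∘(F+β))∘f − f((F+β)S₁^{−1} + S₁^{−1}∘(F+β))∘f − f S₁^{−1}∘F S₁^{−1}∘f — is skewsymmetric and satisfies the PVA-Jacobi identity for all triples of elements of A; i.e. P is a Hamiltonian difference operator. -/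

import Mathlib

/-!
Both identities are compatible with the Leibniz rules and the shift covariance of the master
formula, so it suffices to check them on generators. On `(u_M, u_N)` skewsymmetry is the symbol
identity `P_{-K} = -S^{-K} P_K`, read off from the four nonzero coefficients. Given
skewsymmetry, the Jacobiator obeys a Leibniz rule in each argument, so the Jacobi identity
reduces to the triple `(u, u, u)`. There the Jacobiator at `(λ^T, μ^U)` vanishes for lack of
support unless `T = (m, 0)`, `U = (s, 0)` with `|m| ≤ 6`, `|s| ≤ 4`; in each remaining case,
once `F = a⁻¹ f F'` is substituted, it is a polynomial identity in `f, f', F'` at the sites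
`(k, 0)`.
-/

open MvPolynomial

namespace MPVA

/-- The algebra of difference polynomials in `ℓ` generators on a `D`-dimensional lattice:
polynomials over `ℂ` in the variables `u^i_N`, `i ∈ Fin ℓ`, `N ∈ ℤ^D`. -/
abbrev A (ℓ D : ℕ) := MvPolynomial (Fin ℓ × (Fin D → ℤ)) ℂ

variable {ℓ D : ℕ}

/-- The shift automorphism `S^M` sending `u^i_N` to `u^i_{N+M}`. -/
noncomputable def Sh (M : Fin D → ℤ) : A ℓ D ≃ₐ[ℂ] A ℓ D :=
  renameEquiv ℂ ((Equiv.refl (Fin ℓ)).prodCongr (Equiv.addRight M))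

/-- The `α`-th standard basis vector `E_α ∈ ℤ^D`. -/
def E (α : Fin D) : Fin D → ℤ := fun β => if β = α then 1 else 0

/-- Coefficient `B_T(f,g)` of `λ^T` in the master-formula λ-bracket `{f_λ g}` determined
by the generator coefficients `{u^i_λ u^j} = Σ_T (P j i T)·λ^T`:
`{f_λ g} = Σ_{i,j,M,N,T'} (∂g/∂u^j_N)·S^N(P^{ji}_{T'})·S^{N+T'−M}(∂f/∂u^i_M)·λ^{N+T'−M}`. -/
noncomputable def B (P : Fin ℓ → Fin ℓ → (Fin D → ℤ) → A ℓ D)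
    (T : Fin D → ℤ) (f g : A ℓ D) : A ℓ D :=
  ∑ᶠ (i : Fin ℓ) (j : Fin ℓ) (M : Fin D → ℤ) (N : Fin D → ℤ),
    (pderiv (j, N) g) * (Sh N (P j i (T - N + M))) * (Sh T (pderiv (i, M) f))

/-- The family of generator coefficients has only finitely many nonzero members. -/
def FinSupp (P : Fin ℓ → Fin ℓ → (Fin D → ℤ) → A ℓ D) : Prop :=
  {x : (Fin ℓ × Fin ℓ) × (Fin D → ℤ) | P x.1.1 x.1.2 x.2 ≠ 0}.Finite

/-- The PVA-Jacobi identity for the triple `(f,g,h)`, written coefficient-wise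
(for all `T, U ∈ ℤ^D`, the coefficient of `λ^T μ^U` in
`Σ_U {f_λ B_U(g,h)}μ^U − Σ_T {g_μ B_T(f,h)}λ^T = Σ_{T,U} B_U(B_T(f,g),h)λ^{T+U}μ^U`). -/
def Jacobi (P : Fin ℓ → Fin ℓ → (Fin D → ℤ) → A ℓ D) (f g h : A ℓ D) : Prop :=
  ∀ T U : Fin D → ℤ,
    B P T f (B P U g h) - B P U g (B P T f h) = B P U (B P (T - U) f g) h

/-- For `D = 2`: the lattice point `(m,n) ∈ ℤ²`. -/
def v (m n : ℤ) : Fin 2 → ℤ := ![m, n]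

/-- For `D = 2`, `ℓ = 1`: the variable `u_{mn}` of the scalar two-dimensional algebra. -/
noncomputable def uu (m n : ℤ) : A 1 2 := X ((0 : Fin 1), v m n)

section Shift

variable {ℓ D : ℕ}

lemma Sh_apply (M : Fin D → ℤ) (p : A ℓ D) :
    Sh M p = rename (fun x : Fin ℓ × (Fin D → ℤ) => (x.1, x.2 + M)) p := rfl

@[simp]
lemma Sh_X (M : Fin D → ℤ) (x : Fin ℓ × (Fin D → ℤ)) : Sh M (X x) = X (x.1, x.2 + M) :=
  rename_X _ _

@[simp]
lemma Sh_C (M : Fin D → ℤ) (c : ℂ) : Sh (ℓ := ℓ) M (C c) = C c :=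
  rename_C _ _

lemma Sh_Sh (M N : Fin D → ℤ) (p : A ℓ D) : Sh M (Sh N p) = Sh (N + M) p := by
  simp only [Sh_apply, rename_rename, Function.comp_def, add_assoc]

@[simp]
lemma Sh_zero (p : A ℓ D) : Sh 0 p = p := by
  simp only [Sh_apply, add_zero]
  exact rename_id_apply p

lemma Sh_neg_Sh (T : Fin D → ℤ) (p : A ℓ D) : Sh (-T) (Sh T p) = p := by
  rw [Sh_Sh, add_neg_cancel, Sh_zero]

lemma pderiv_Sh (x : Fin ℓ × (Fin D → ℤ)) (M : Fin D → ℤ) (p : A ℓ D) :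
    pderiv x (Sh M p) = Sh M (pderiv (x.1, x.2 - M) p) := by
  have hinj : Function.Injective fun y : Fin ℓ × (Fin D → ℤ) => (y.1, y.2 + M) :=
    fun y z h => Prod.ext (Prod.ext_iff.1 h).1 (add_right_cancel (Prod.ext_iff.1 h).2)
  have h := pderiv_rename hinj (x.1, x.2 - M) p
  simp only [sub_add_cancel] at h
  rw [Sh_apply, Sh_apply, ← h]

end Shift

section Support

variable {ℓ D : ℕ}

def DependsOnlyOn (p : A ℓ D) (s : Finset (Fin D → ℤ)) : Prop :=
  ∀ N ∉ s, ∀ i, pderiv (i, N) p = 0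

noncomputable def sites (p : A ℓ D) : Finset (Fin D → ℤ) := p.vars.image Prod.snd

variable {p q : A ℓ D} {s t : Finset (Fin D → ℤ)}

lemma dependsOnlyOn_sites (p : A ℓ D) : DependsOnlyOn p (sites p) :=
  fun _ hN _ => pderiv_eq_zero_of_notMem_vars fun h => hN (Finset.mem_image_of_mem Prod.snd h)

lemma DependsOnlyOn.mono (hp : DependsOnlyOn p s) (hst : s ⊆ t) : DependsOnlyOn p t :=
  fun N hN => hp N fun h => hN (hst h)

lemma dependsOnlyOn_C (c : ℂ) (s : Finset (Fin D → ℤ)) : DependsOnlyOn (C c : A ℓ D) s :=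
  fun _ _ _ => pderiv_C

lemma dependsOnlyOn_X (i : Fin ℓ) (M : Fin D → ℤ) : DependsOnlyOn (X (i, M) : A ℓ D) {M} :=
  fun _ hN _ => pderiv_X_of_ne fun h => hN (Finset.mem_singleton.2 (congrArg Prod.snd h).symm)

lemma DependsOnlyOn.add (hp : DependsOnlyOn p s) (hq : DependsOnlyOn q s) :
    DependsOnlyOn (p + q) s := fun N hN i => by
  rw [map_add, hp N hN i, hq N hN i, add_zero]

lemma DependsOnlyOn.mul (hp : DependsOnlyOn p s) (hq : DependsOnlyOn q s) :
    DependsOnlyOn (p * q) s := fun N hN i => by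
  rw [pderiv_mul, hp N hN i, hq N hN i, zero_mul, mul_zero, add_zero]

lemma DependsOnlyOn.Sh (hp : DependsOnlyOn p s) (K : Fin D → ℤ) :
    DependsOnlyOn (Sh K p) (s.image (· + K)) := fun N hN i => by
  rw [pderiv_Sh, hp (N - K) (fun h => hN (Finset.mem_image.2 ⟨N - K, h, sub_add_cancel N K⟩)),
    map_zero]

end Support

section Bracket

variable {ℓ D : ℕ} (P : Fin ℓ → Fin ℓ → (Fin D → ℤ) → A ℓ D)

lemma B_eq_sum (T : Fin D → ℤ) {p q : A ℓ D} {s t : Finset (Fin D → ℤ)}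
    (hp : DependsOnlyOn p s) (hq : DependsOnlyOn q t) :
    B P T p q = ∑ i, ∑ j, ∑ M ∈ s, ∑ N ∈ t,
      pderiv (j, N) q * Sh N (P j i (T - N + M)) * Sh T (pderiv (i, M) p) := by
  simp only [B, finsum_eq_sum_of_fintype]
  refine Finset.sum_congr rfl fun i _ => Finset.sum_congr rfl fun j _ => ?_
  rw [finsum_eq_sum_of_support_subset _ fun M hM => ?_]
  · refine Finset.sum_congr rfl fun M _ => finsum_eq_sum_of_support_subset _ fun N hN => ?_
    by_contra hNt
    simp [hq N hNt] at hN
  · by_contra hMs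
    simp [hp M hMs] at hM

@[simp]
lemma B_C_left (T : Fin D → ℤ) (c : ℂ) (q : A ℓ D) : B P T (C c) q = 0 := by
  simp [B_eq_sum P T (dependsOnlyOn_C c ∅) (dependsOnlyOn_sites q)]

@[simp]
lemma B_C_right (T : Fin D → ℤ) (p : A ℓ D) (c : ℂ) : B P T p (C c) = 0 := by
  simp [B_eq_sum P T (dependsOnlyOn_sites p) (dependsOnlyOn_C c ∅)]

@[simp]
lemma B_zero_left (T : Fin D → ℤ) (q : A ℓ D) : B P T 0 q = 0 := by
  simpa using B_C_left P T 0 q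

@[simp]
lemma B_zero_right (T : Fin D → ℤ) (p : A ℓ D) : B P T p 0 = 0 := by
  simpa using B_C_right P T p 0

lemma B_add_left (T : Fin D → ℤ) (p p' q : A ℓ D) :
    B P T (p + p') q = B P T p q + B P T p' q := by
  have hp := (dependsOnlyOn_sites p).mono (Finset.subset_union_left (s₂ := sites p'))
  have hp' := (dependsOnlyOn_sites p').mono (Finset.subset_union_right (s₁ := sites p))
  have hq := dependsOnlyOn_sites q
  rw [B_eq_sum P T (hp.add hp') hq, B_eq_sum P T hp hq, B_eq_sum P T hp' hq]
  simp only [map_add, mul_add, Finset.sum_add_distrib]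

lemma B_add_right (T : Fin D → ℤ) (p q q' : A ℓ D) :
    B P T p (q + q') = B P T p q + B P T p q' := by
  have hp := dependsOnlyOn_sites p
  have hq := (dependsOnlyOn_sites q).mono (Finset.subset_union_left (s₂ := sites q'))
  have hq' := (dependsOnlyOn_sites q').mono (Finset.subset_union_right (s₁ := sites q))
  rw [B_eq_sum P T hp (hq.add hq'), B_eq_sum P T hp hq, B_eq_sum P T hp hq']
  simp only [map_add, add_mul, Finset.sum_add_distrib]

lemma B_mul_left (T : Fin D → ℤ) (p p' q : A ℓ D) :
    B P T (p * p') q = Sh T p * B P T p' q + Sh T p' * B P T p q := by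
  have hp := (dependsOnlyOn_sites p).mono (Finset.subset_union_left (s₂ := sites p'))
  have hp' := (dependsOnlyOn_sites p').mono (Finset.subset_union_right (s₁ := sites p))
  have hq := dependsOnlyOn_sites q
  rw [B_eq_sum P T (hp.mul hp') hq, B_eq_sum P T hp hq, B_eq_sum P T hp' hq]
  simp only [Finset.mul_sum, ← Finset.sum_add_distrib]
  refine Finset.sum_congr rfl fun i _ => Finset.sum_congr rfl fun j _ =>
    Finset.sum_congr rfl fun M _ => Finset.sum_congr rfl fun N _ => ?_
  rw [pderiv_mul, map_add, map_mul, map_mul]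
  ring

lemma B_mul_right (T : Fin D → ℤ) (p q q' : A ℓ D) :
    B P T p (q * q') = q * B P T p q' + q' * B P T p q := by
  have hp := dependsOnlyOn_sites p
  have hq := (dependsOnlyOn_sites q).mono (Finset.subset_union_left (s₂ := sites q'))
  have hq' := (dependsOnlyOn_sites q').mono (Finset.subset_union_right (s₁ := sites q))
  rw [B_eq_sum P T hp (hq.mul hq'), B_eq_sum P T hp hq, B_eq_sum P T hp hq']
  simp only [Finset.mul_sum, ← Finset.sum_add_distrib]
  refine Finset.sum_congr rfl fun i _ => Finset.sum_congr rfl fun j _ =>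
    Finset.sum_congr rfl fun M _ => Finset.sum_congr rfl fun N _ => ?_
  rw [pderiv_mul]
  ring

lemma B_Sh_left (T K : Fin D → ℤ) (p q : A ℓ D) :
    B P T (Sh K p) q = B P (T + K) p q := by
  rw [B_eq_sum P T ((dependsOnlyOn_sites p).Sh K) (dependsOnlyOn_sites q),
    B_eq_sum P _ (dependsOnlyOn_sites p) (dependsOnlyOn_sites q)]
  refine Finset.sum_congr rfl fun i _ => Finset.sum_congr rfl fun j _ => ?_
  rw [Finset.sum_image fun x _ y _ h => add_left_injective K h]
  refine Finset.sum_congr rfl fun M _ => Finset.sum_congr rfl fun N _ => ?_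
  rw [pderiv_Sh, Sh_Sh, add_sub_cancel_right, add_comm K T,
    show T - N + (M + K) = T + K - N + M by abel]

lemma B_Sh_right (T K : Fin D → ℤ) (p q : A ℓ D) :
    B P T p (Sh K q) = Sh K (B P (T - K) p q) := by
  rw [B_eq_sum P T (dependsOnlyOn_sites p) ((dependsOnlyOn_sites q).Sh K),
    B_eq_sum P _ (dependsOnlyOn_sites p) (dependsOnlyOn_sites q)]
  simp only [map_sum]
  refine Finset.sum_congr rfl fun i _ => Finset.sum_congr rfl fun j _ =>
    Finset.sum_congr rfl fun M _ => ?_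
  rw [Finset.sum_image fun x _ y _ h => add_left_injective K h]
  refine Finset.sum_congr rfl fun N _ => ?_
  rw [pderiv_Sh, map_mul, map_mul, Sh_Sh, Sh_Sh, add_sub_cancel_right, sub_add_cancel,
    show T - (N + K) + M = T - K - N + M by abel]

lemma B_X_left (T : Fin D → ℤ) (i : Fin ℓ) (M : Fin D → ℤ) {q : A ℓ D}
    {t : Finset (Fin D → ℤ)} (hq : DependsOnlyOn q t) :
    B P T (X (i, M)) q = ∑ j, ∑ N ∈ t, pderiv (j, N) q * Sh N (P j i (T - N + M)) := by
  rw [B_eq_sum P T (dependsOnlyOn_X i M) hq]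
  simp [pderiv_X, Pi.single_apply, Finset.sum_ite_eq]

lemma B_X_right (T : Fin D → ℤ) {p : A ℓ D} {s : Finset (Fin D → ℤ)}
    (hp : DependsOnlyOn p s) (j : Fin ℓ) (N : Fin D → ℤ) :
    B P T p (X (j, N)) = ∑ i, ∑ M ∈ s, Sh N (P j i (T - N + M)) * Sh T (pderiv (i, M) p) := by
  rw [B_eq_sum P T hp (dependsOnlyOn_X j N)]
  simp [pderiv_X, Pi.single_apply, Finset.sum_ite_eq]

@[simp]
lemma B_X_X (T : Fin D → ℤ) (i j : Fin ℓ) (M N : Fin D → ℤ) :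
    B P T (X (i, M)) (X (j, N)) = Sh N (P j i (T - N + M)) := by
  rw [B_X_left P T i M (dependsOnlyOn_X j N)]
  simp [pderiv_X, Pi.single_apply, Finset.sum_ite_eq]

end Bracket

section Skew

variable {ℓ D : ℕ} (P : Fin ℓ → Fin ℓ → (Fin D → ℤ) → A ℓ D)
  (hP : ∀ i j K, P i j (-K) = -Sh (-K) (P j i K))
include hP

lemma B_neg_X_X (T : Fin D → ℤ) (i j : Fin ℓ) (M N : Fin D → ℤ) :
    B P (-T) (X (j, N)) (X (i, M)) = -Sh (-T) (B P T (X (i, M)) (X (j, N))) := by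
  rw [B_X_X, B_X_X, show -T - M + N = -(T - N + M) by abel, hP, map_neg, Sh_Sh, Sh_Sh,
    show -(T - N + M) + M = N + -T by abel]

lemma B_neg_X (T : Fin D → ℤ) (i : Fin ℓ) (M : Fin D → ℤ) (q : A ℓ D) :
    B P (-T) q (X (i, M)) = -Sh (-T) (B P T (X (i, M)) q) := by
  induction q using MvPolynomial.induction_on with
  | C c => simp
  | add q q' hq hq' => rw [B_add_left, B_add_right, hq, hq', map_add, neg_add]
  | mul_X q x hq =>
    obtain ⟨j, N⟩ := x
    rw [B_mul_left, B_mul_right, B_neg_X_X P hP, hq, map_add, map_mul, map_mul]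
    ring

theorem B_neg_swap (p q : A ℓ D) (T : Fin D → ℤ) :
    B P (-T) q p = -Sh (-T) (B P T p q) := by
  induction p using MvPolynomial.induction_on generalizing q with
  | C c => simp
  | add p p' hp hp' => rw [B_add_left, B_add_right, hp, hp', map_add, neg_add]
  | mul_X p x hp =>
    obtain ⟨i, M⟩ := x
    rw [B_mul_right, B_mul_left, hp, B_neg_X P hP, map_add, map_mul, map_mul, Sh_neg_Sh,
      Sh_neg_Sh]
    ring

end Skew

section Jacobi

variable {ℓ D : ℕ} (P : Fin ℓ → Fin ℓ → (Fin D → ℤ) → A ℓ D)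

noncomputable def jacobiator (T U : Fin D → ℤ) (p q r : A ℓ D) : A ℓ D :=
  B P T p (B P U q r) - B P U q (B P T p r) - B P U (B P (T - U) p q) r

lemma jacobi_iff_jacobiator_eq_zero (p q r : A ℓ D) :
    Jacobi P p q r ↔ ∀ T U, jacobiator P T U p q r = 0 := by
  simp only [Jacobi, jacobiator, sub_eq_zero]

variable (T U : Fin D → ℤ)

@[simp]
lemma jacobiator_C_left (c : ℂ) (q r : A ℓ D) : jacobiator P T U (C c) q r = 0 := by
  simp [jacobiator]

@[simp]
lemma jacobiator_C_mid (p : A ℓ D) (c : ℂ) (r : A ℓ D) : jacobiator P T U p (C c) r = 0 := by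
  simp [jacobiator]

@[simp]
lemma jacobiator_C_right (p q : A ℓ D) (c : ℂ) : jacobiator P T U p q (C c) = 0 := by
  simp [jacobiator]

lemma jacobiator_add_left (p p' q r : A ℓ D) :
    jacobiator P T U (p + p') q r = jacobiator P T U p q r + jacobiator P T U p' q r := by
  simp only [jacobiator, B_add_left, B_add_right]
  ring

lemma jacobiator_add_mid (p q q' r : A ℓ D) :
    jacobiator P T U p (q + q') r = jacobiator P T U p q r + jacobiator P T U p q' r := by
  simp only [jacobiator, B_add_left, B_add_right]
  ring

lemma jacobiator_add_right (p q r r' : A ℓ D) :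
    jacobiator P T U p q (r + r') = jacobiator P T U p q r + jacobiator P T U p q r' := by
  simp only [jacobiator, B_add_right]
  ring

lemma jacobiator_mul_left (hskew : ∀ p q T, B P (-T) q p = -Sh (-T) (B P T p q))
    (p p' q r : A ℓ D) :
    jacobiator P T U (p * p') q r =
      Sh T p * jacobiator P T U p' q r + Sh T p' * jacobiator P T U p q r := by
  simp only [jacobiator, B_mul_left, B_mul_right, B_add_left, B_add_right, B_Sh_right,
    B_Sh_left]
  -- the terms `B (U - T) q p` coming from the Leibniz rule cancel only after skewsymmetry
  rw [show U - T = -(T - U) by abel]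
  simp only [hskew, map_neg, Sh_Sh, sub_add_cancel, show -(T - U) + T = U by abel,
    show U + (T - U) = T by abel]
  ring

lemma jacobiator_mul_mid (p q q' r : A ℓ D) :
    jacobiator P T U p (q * q') r =
      Sh U q * jacobiator P T U p q' r + Sh U q' * jacobiator P T U p q r := by
  simp only [jacobiator, B_mul_left, B_mul_right, B_add_left, B_add_right, B_Sh_right]
  ring

lemma jacobiator_mul_right (p q r r' : A ℓ D) :
    jacobiator P T U p q (r * r') = r * jacobiator P T U p q r' + r' * jacobiator P T U p q r := by
  simp only [jacobiator, B_mul_right, B_add_right]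
  ring

lemma jacobiator_X_X_X (i j k : Fin ℓ) (L M N : Fin D → ℤ) :
    jacobiator P T U (X (i, L)) (X (j, M)) (X (k, N)) =
      Sh N (jacobiator P (T - N + L) (U - N + M) (X (i, 0)) (X (j, 0)) (X (k, 0))) := by
  have hX : ∀ (i : Fin ℓ) (L : Fin D → ℤ), (X (i, L) : A ℓ D) = Sh L (X (i, 0)) := by simp
  rw [hX i L, hX j M, hX k N]
  simp only [jacobiator, B_Sh_left, B_Sh_right, map_sub]
  rw [show T - U - M + L = T - N + L - (U - N + M) by abel]

theorem jacobi_of_generators (hskew : ∀ p q T, B P (-T) q p = -Sh (-T) (B P T p q))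
    (hgen : ∀ i j k T U, jacobiator P T U (X (i, 0)) (X (j, 0)) (X (k, 0)) = 0)
    (p q r : A ℓ D) : Jacobi P p q r := by
  have hXXX (x y z : Fin ℓ × (Fin D → ℤ)) (T U : Fin D → ℤ) :
      jacobiator P T U (X x) (X y) (X z) = 0 := by
    rw [jacobiator_X_X_X, hgen, map_zero]
  have hXX (x y : Fin ℓ × (Fin D → ℤ)) (r : A ℓ D) (T U : Fin D → ℤ) :
      jacobiator P T U (X x) (X y) r = 0 := by
    induction r using MvPolynomial.induction_on with
    | C c => simp
    | add r r' hr hr' => rw [jacobiator_add_right, hr, hr', add_zero]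
    | mul_X r z hr => rw [jacobiator_mul_right, hr, hXXX, mul_zero, mul_zero, add_zero]
  have hX (x : Fin ℓ × (Fin D → ℤ)) (q r : A ℓ D) (T U : Fin D → ℤ) :
      jacobiator P T U (X x) q r = 0 := by
    induction q using MvPolynomial.induction_on with
    | C c => simp
    | add q q' hq hq' => rw [jacobiator_add_mid, hq, hq', add_zero]
    | mul_X q y hq => rw [jacobiator_mul_mid, hq, hXX, mul_zero, mul_zero, add_zero]
  rw [jacobi_iff_jacobiator_eq_zero]
  intro T U
  induction p using MvPolynomial.induction_on with
  | C c => simp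
  | add p p' hp hp' => rw [jacobiator_add_left, hp, hp', add_zero]
  | mul_X p x hp => rw [jacobiator_mul_left P T U hskew, hp, hX, mul_zero, mul_zero, add_zero]

end Jacobi

section Scalar

variable {D : ℕ} (P : Fin 1 → Fin 1 → (Fin D → ℤ) → A 1 D)

lemma jacobiator_X_zero_eq_sum {W : Finset (Fin D → ℤ)}
    (hW : ∀ K, DependsOnlyOn (P 0 0 K) W) (T U : Fin D → ℤ) :
    jacobiator P T U (X (0, 0)) (X (0, 0)) (X (0, 0)) =
      ∑ N ∈ W, pderiv (0, N) (P 0 0 U) * Sh N (P 0 0 (T - N)) -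
      ∑ N ∈ W, pderiv (0, N) (P 0 0 T) * Sh N (P 0 0 (U - N)) -
      ∑ M ∈ W, P 0 0 (U + M) * Sh U (pderiv (0, M) (P 0 0 (T - U))) := by
  simp only [jacobiator, B_X_X, sub_zero, add_zero, Sh_zero]
  rw [B_X_left P T 0 0 (hW U), B_X_left P U 0 0 (hW T), B_X_right P U (hW (T - U))]
  simp

end Scalar

section Lattice

@[simp] lemma v_apply_zero (m n : ℤ) : v m n 0 = m := rfl

@[simp] lemma v_apply_one (m n : ℤ) : v m n 1 = n := rfl

lemma v_eq_iff {m n m' n' : ℤ} : v m n = v m' n' ↔ m = m' ∧ n = n' :=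
  ⟨fun h => ⟨congrFun h 0, congrFun h 1⟩, by rintro ⟨rfl, rfl⟩; rfl⟩

lemma eq_v (K : Fin 2 → ℤ) : K = v (K 0) (K 1) := by
  ext i; fin_cases i <;> rfl

lemma v_zero_zero : v 0 0 = 0 := by
  ext i; fin_cases i <;> rfl

lemma v_eq_zero_iff {m n : ℤ} : v m n = 0 ↔ m = 0 ∧ n = 0 := by
  rw [← v_zero_zero, v_eq_iff]

@[simp] lemma Sh_v_zero_zero (p : A 1 2) : Sh (v 0 0) p = p := by
  rw [v_zero_zero, Sh_zero]

lemma v_add (m n m' n' : ℤ) : v m n + v m' n' = v (m + m') (n + n') := by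
  ext i; fin_cases i <;> rfl

lemma v_sub (m n m' n' : ℤ) : v m n - v m' n' = v (m - m') (n - n') := by
  ext i; fin_cases i <;> rfl

lemma v_neg (m n : ℤ) : -v m n = v (-m) (-n) := by
  ext i; fin_cases i <;> rfl

noncomputable def window : Finset (Fin 2 → ℤ) :=
  {v (-2) 0, v (-1) 0, v 0 0, v 1 0, v 2 0}

lemma mem_window_iff {N : Fin 2 → ℤ} :
    N ∈ window ↔ N 1 = 0 ∧ -2 ≤ N 0 ∧ N 0 ≤ 2 := by
  rw [eq_v N]
  simp only [window, Finset.mem_insert, Finset.mem_singleton, v_eq_iff, v_apply_zero,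
    v_apply_one]
  omega

lemma sum_window (g : (Fin 2 → ℤ) → A 1 2) :
    ∑ N ∈ window, g N = g (v (-2) 0) + g (v (-1) 0) + g (v 0 0) + g (v 1 0) + g (v 2 0) := by
  rw [window, Finset.sum_insert (by simp [v_eq_iff]), Finset.sum_insert (by simp [v_eq_iff]),
    Finset.sum_insert (by simp [v_eq_iff]), Finset.sum_insert (by simp [v_eq_iff]),
    Finset.sum_singleton]
  ring

end Lattice

section SingleSite

variable {D : ℕ} {f f' : A 1 D} (hf : ∀ N ≠ 0, pderiv (0, N) f = 0)
  (hf' : pderiv (0, 0) f = f')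
include hf hf'

lemma pderiv_eq_ite (N : Fin D → ℤ) : pderiv (0, N) f = if N = 0 then f' else 0 := by
  split_ifs with hN
  · rw [hN, hf']
  · exact hf N hN

lemma pderiv_Sh_eq_ite (N M : Fin D → ℤ) :
    pderiv (0, N) (Sh M f) = if N = M then Sh M f' else 0 := by
  rw [pderiv_Sh, pderiv_eq_ite hf hf']
  simp only [sub_eq_zero]
  split_ifs <;> simp

end SingleSite

section SecondOrder

variable (f F : A 1 2) (β : ℂ)

noncomputable def secondOrderSymbol : Fin 1 → Fin 1 → (Fin 2 → ℤ) → A 1 2 := fun _ _ T =>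
  if T = v 2 0 then f * Sh (v 1 0) F * Sh (v 2 0) f
  else if T = v 1 0 then f * Sh (v 1 0) f * (F + Sh (v 1 0) F + C β)
  else if T = v (-1) 0 then -(Sh (v (-1) 0) f * f * (F + Sh (v (-1) 0) F + C β))
  else if T = v (-2) 0 then -(Sh (v (-2) 0) f * Sh (v (-1) 0) F * f)
  else 0

lemma secondOrderSymbol_eq_zero {i j : Fin 1} {K : Fin 2 → ℤ}
    (hK : ¬(K 1 = 0 ∧ -2 ≤ K 0 ∧ K 0 ≤ 2)) : secondOrderSymbol f F β i j K = 0 := by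
  rw [eq_v K] at hK ⊢
  simp only [secondOrderSymbol, v_eq_iff, v_apply_zero, v_apply_one] at hK ⊢
  rw [if_neg (by omega), if_neg (by omega), if_neg (by omega), if_neg (by omega)]

lemma secondOrderSymbol_neg (i j : Fin 1) (K : Fin 2 → ℤ) :
    secondOrderSymbol f F β i j (-K) = -Sh (-K) (secondOrderSymbol f F β j i K) := by
  obtain ⟨m, n, rfl⟩ : ∃ m n, K = v m n := ⟨K 0, K 1, eq_v K⟩
  rw [v_neg]
  by_cases hK : n = 0 ∧ -2 ≤ m ∧ m ≤ 2
  · obtain ⟨rfl, hm, hm'⟩ := hK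
    interval_cases m <;>
      simp only [secondOrderSymbol, v_eq_iff, Int.reduceNeg, Int.reduceEq, neg_zero, and_true,
        reduceIte, map_neg, map_mul, map_add, Sh_C, Sh_Sh, v_add, Int.reduceAdd,
        Sh_v_zero_zero, neg_neg]
    all_goals ring
  · rw [secondOrderSymbol_eq_zero f F β (by simp only [v_apply_zero, v_apply_one]; omega),
      secondOrderSymbol_eq_zero f F β (by simp only [v_apply_zero, v_apply_one]; omega),
      map_zero, neg_zero]

variable {f F} (hf : ∀ N ≠ 0, pderiv (0, N) f = 0) (hF : ∀ N ≠ 0, pderiv (0, N) F = 0)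
include hf hF

lemma dependsOnlyOn_secondOrderSymbol (K : Fin 2 → ℤ) :
    DependsOnlyOn (secondOrderSymbol f F β 0 0 K) window := by
  intro N hN i
  obtain rfl : i = 0 := Subsingleton.elim _ _
  have hSh {g : A 1 2} (hg : ∀ N ≠ 0, pderiv (0, N) g = 0) {M : Fin 2 → ℤ} (hM : N ≠ M) :
      pderiv (0, N) (Sh M g) = 0 := by
    rw [pderiv_Sh_eq_ite hg rfl, if_neg hM]
  simp only [window, Finset.mem_insert, Finset.mem_singleton, not_or] at hN
  obtain ⟨hm2, hm1, h0, h1, h2⟩ := hN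
  rw [v_zero_zero] at h0
  simp only [secondOrderSymbol]
  split_ifs <;> simp [hf N h0, hF N h0, hSh hf, hSh hF, hm2, hm1, h1, h2]

lemma jacobiator_secondOrderSymbol_of_far (T U : Fin 2 → ℤ)
    (hTU : ¬(T 1 = 0 ∧ U 1 = 0 ∧ -6 ≤ T 0 ∧ T 0 ≤ 6 ∧ -4 ≤ U 0 ∧ U 0 ≤ 4)) :
    jacobiator (secondOrderSymbol f F β) T U (X (0, 0)) (X (0, 0)) (X (0, 0)) = 0 := by
  rw [jacobiator_X_zero_eq_sum _ (dependsOnlyOn_secondOrderSymbol β hf hF),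
    Finset.sum_eq_zero, Finset.sum_eq_zero, Finset.sum_eq_zero, sub_zero, sub_zero] <;>
    intro N hN <;> rw [mem_window_iff] at hN
  · by_cases hK : (T - U) 1 = 0 ∧ -2 ≤ (T - U) 0 ∧ (T - U) 0 ≤ 2
    · simp only [Pi.sub_apply] at hK
      rw [secondOrderSymbol_eq_zero f F β (K := U + N) (by simp only [Pi.add_apply]; omega),
        zero_mul]
    · rw [secondOrderSymbol_eq_zero f F β hK, map_zero, map_zero, mul_zero]
  · by_cases hK : T 1 = 0 ∧ -2 ≤ T 0 ∧ T 0 ≤ 2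
    · rw [secondOrderSymbol_eq_zero f F β (K := U - N) (by simp only [Pi.sub_apply]; omega),
        map_zero, mul_zero]
    · rw [secondOrderSymbol_eq_zero f F β hK, map_zero, zero_mul]
  · by_cases hK : U 1 = 0 ∧ -2 ≤ U 0 ∧ U 0 ≤ 2
    · rw [secondOrderSymbol_eq_zero f F β (K := T - N) (by simp only [Pi.sub_apply]; omega),
        map_zero, mul_zero]
    · rw [secondOrderSymbol_eq_zero f F β hK, map_zero, zero_mul]

set_option maxHeartbeats 1000000 in
lemma jacobiator_secondOrderSymbol_axis {f' F' : A 1 2} (hf' : pderiv (0, 0) f = f')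
    (hF' : pderiv (0, 0) F = F') {c : ℂ} (hFf : F = C c * (f * F')) {m s : ℤ}
    (hm : -6 ≤ m) (hm' : m ≤ 6) (hs : -4 ≤ s) (hs' : s ≤ 4) :
    jacobiator (secondOrderSymbol f F β) (v m 0) (v s 0) (X (0, 0)) (X (0, 0)) (X (0, 0)) =
      0 := by
  rw [jacobiator_X_zero_eq_sum _ (dependsOnlyOn_secondOrderSymbol β hf hF)]
  simp only [sum_window]
  interval_cases m <;> interval_cases s <;>
    simp only [secondOrderSymbol, v_sub, v_add, v_eq_iff, v_eq_zero_iff, Int.reduceSub,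
      Int.reduceAdd, Int.reduceNeg, Int.reduceEq, sub_zero, and_true, reduceIte, pderiv_mul,
      pderiv_C, pderiv_eq_ite hf hf', pderiv_eq_ite hF hF', pderiv_Sh_eq_ite hf hf',
      pderiv_Sh_eq_ite hF hF', map_add, map_mul, map_neg, map_zero, Sh_C, Sh_Sh,
      Sh_v_zero_zero, mul_zero, zero_mul, add_zero, zero_add, neg_zero]
  -- the remaining identities hold only modulo `f F' = a F`, so `F` is eliminated first
  all_goals
    subst hFf
    simp only [map_mul, Sh_C]
    ring

lemma jacobiator_secondOrderSymbol_X_zero {c : ℂ} (hFf : F = C c * (f * pderiv (0, 0) F))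
    (i j k : Fin 1) (T U : Fin 2 → ℤ) :
    jacobiator (secondOrderSymbol f F β) T U (X (i, 0)) (X (j, 0)) (X (k, 0)) = 0 := by
  obtain rfl : i = 0 := Subsingleton.elim _ _
  obtain rfl : j = 0 := Subsingleton.elim _ _
  obtain rfl : k = 0 := Subsingleton.elim _ _
  by_cases hTU : T 1 = 0 ∧ U 1 = 0 ∧ -6 ≤ T 0 ∧ T 0 ≤ 6 ∧ -4 ≤ U 0 ∧ U 0 ≤ 4
  · obtain ⟨hT, hU, hm, hm', hs, hs'⟩ := hTU
    rw [eq_v T, eq_v U, hT, hU]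
    exact jacobiator_secondOrderSymbol_axis β hf hF rfl rfl hFf hm hm' hs hs'
  · exact jacobiator_secondOrderSymbol_of_far β hf hF T U hTU

end SecondOrder

/-- for `f = f(u)`, `F = F(u)` with `f·F' = a·F` (`a ≠ 0`) and `β ∈ ℂ`, the
essentially one-dimensional second-order operator
`P = f S₁∘F S₁∘f + f((F+β)S₁ + S₁∘(F+β))∘f − f((F+β)S₁^{−1} + S₁^{−1}∘(F+β))∘f
− f S₁^{−1}∘F S₁^{−1}∘f` is Hamiltonian: its master-formula λ-bracket is skewsymmetric
and satisfies the PVA-Jacobi identity for all triples. -/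
theorem second_order_one_dimensional_is_hamiltonian (f F : A 1 2)
    (hfdep : ∀ N : Fin 2 → ℤ, N ≠ 0 → pderiv ((0 : Fin 1), N) f = 0)
    (hFdep : ∀ N : Fin 2 → ℤ, N ≠ 0 → pderiv ((0 : Fin 1), N) F = 0)
    (a : ℂ) (ha : a ≠ 0)
    (hfF : f * pderiv ((0 : Fin 1), (0 : Fin 2 → ℤ)) F = C a * F)
    (β : ℂ)
    (P : Fin 1 → Fin 1 → (Fin 2 → ℤ) → A 1 2)
    (hP : P = fun _ _ T =>
      if T = v 2 0 then f * Sh (v 1 0) F * Sh (v 2 0) f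
      else if T = v 1 0 then f * Sh (v 1 0) f * (F + Sh (v 1 0) F + C β)
      else if T = v (-1) 0 then -(Sh (v (-1) 0) f * f * (F + Sh (v (-1) 0) F + C β))
      else if T = v (-2) 0 then -(Sh (v (-2) 0) f * Sh (v (-1) 0) F * f)
      else 0) :
    (∀ (p q : A 1 2) (T : Fin 2 → ℤ), B P (-T) q p = - Sh (-T) (B P T p q)) ∧
    (∀ p q r : A 1 2, Jacobi P p q r) := by
  have hFf : F = C a⁻¹ * (f * pderiv ((0 : Fin 1), (0 : Fin 2 → ℤ)) F) := by
    rw [hfF, ← mul_assoc, ← C_mul, inv_mul_cancel₀ ha, C_1, one_mul]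
  have hP' : P = secondOrderSymbol f F β := hP
  subst hP'
  have hskew := B_neg_swap _ (secondOrderSymbol_neg f F β)
  exact ⟨hskew, jacobi_of_generators _ hskew
    (jacobiator_secondOrderSymbol_X_zero β hfdep hFdep hFf)⟩

end MPVA
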